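/- Let A be a factorial domain and G ⊆ Aut(A) finite with R = A^G. For every χ ∈ Z^1(G,U(A)): (i) overline{A_χA} = d_χA where d_χ = gcd(A_χ) ∈ A_{μ_χ} is a semi-invariant for a cocycle μ_χ ∈ Z^1(G,U(A)) whose class [μ_χ] ∈ H^1(G,U(A)) is uniquely determined; (ii) the divisor class cl(A_χ) ∈ C_R of the reflexive rank-one R-module A_χ equals [χ^{-1}μ_χ] ∈ H̃ under the isomorphism C_R ≅ H̃; (iii) A_χ is a free R-module if and only if [χ] = [μ_χ] in H^1(G,U(A)). -/

import Mathlib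

open scoped Classical Pointwise

namespace QGor

variable {A : Type*} [CommRing A]

/-- The divisorial closure of an ideal: the intersection of all principal ideals containing it. -/
def divClosure (J : Ideal A) : Ideal A :=
  sInf {I : Ideal A | (∃ a : A, I = Ideal.span {a}) ∧ J ≤ I}

/-- `d` is a greatest common divisor of the set `X`. -/
def IsGCDOf (d : A) (X : Set A) : Prop :=
  (∀ x ∈ X, d ∣ x) ∧ ∀ c : A, (∀ x ∈ X, c ∣ x) → c ∣ d

/-- A height one prime ideal: a nonzero prime which is minimal over `⊥`. -/
structure IsHeightOnePrime (P : Ideal A) : Prop where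
  isPrime : P.IsPrime
  ne_bot : P ≠ ⊥
  height_one : ∀ Q : Ideal A, Q.IsPrime → Q < P → Q = ⊥

/-- A Krull domain: localizations at height one primes are discrete valuation rings, `A` is
the intersection of these localizations inside its quotient field, and every nonzero element
lies in only finitely many height one primes. -/
def IsKrullDomain (A : Type*) [CommRing A] [IsDomain A] : Prop :=
  (∀ P : Ideal A, ∀ hP : IsHeightOnePrime P,
     haveI := hP.isPrime
     IsDiscreteValuationRing (Localization.AtPrime P)) ∧
  (∀ x : FractionRing A,
      (∀ P : Ideal A, IsHeightOnePrime P →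
        ∃ s a : A, s ∉ P ∧ algebraMap A (FractionRing A) s * x = algebraMap A (FractionRing A) a) →
      ∃ a : A, x = algebraMap A (FractionRing A) a) ∧
  (∀ a : A, a ≠ 0 → {P : Ideal A | IsHeightOnePrime P ∧ a ∈ P}.Finite)

variable (G : Type*) [Group G] [MulSemiringAction G A]

/-- A 1-cocycle of `G` with values in the unit group of `A`. -/
def IsCocycle (χ : G → Aˣ) : Prop :=
  ∀ g h : G, (χ (g * h) : A) = (χ g : A) * g • ((χ h : A))

/-- Two 1-cocycles are cohomologous, i.e. differ by the coboundary of a unit `u`. -/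
def Cohomologous (χ μ : G → Aˣ) : Prop :=
  ∃ u : Aˣ, ∀ g : G, (μ g : A) = (χ g : A) * (((u⁻¹ : Aˣ) : A) * g • (u : A))

/-- The set of relative invariants (semi-invariants) of a cocycle `χ`. -/
def semiInv (χ : G → Aˣ) : Set A := {a : A | ∀ g : G, g • a = (χ g : A) * a}

/-- The ring of invariants `A^G`. -/
def fixedSubring : Subring A where
  carrier := {a : A | ∀ g : G, g • a = a}
  mul_mem' := by intro a b ha hb g; rw [smul_mul', ha g, hb g]
  one_mem' := fun g => smul_one g
  add_mem' := by intro a b ha hb g; rw [smul_add, ha g, hb g]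
  zero_mem' := fun g => smul_zero g
  neg_mem' := by intro a ha g; rw [smul_neg, ha g]

/-- The module of semi-invariants `A_χ`, as a module over the ring of invariants. -/
def semiInvModule (χ : G → Aˣ) : Submodule ↥(fixedSubring (A := A) G) A where
  carrier := semiInv G χ
  add_mem' := by intro a b ha hb g; rw [smul_add, ha g, hb g, mul_add]
  zero_mem' := by intro g; rw [smul_zero, mul_zero]
  smul_mem' := by
    intro r a ha g
    have hra : r • a = (r : A) * a := rfl
    rw [hra, smul_mul', r.2 g, ha g, mul_left_comm]

/-!
Since `A` is factorial, the semi-invariants `A_χ` have a gcd `d`, unique up to a unit. Each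
`g ∈ G` maps `A_χ` onto `χ(g) A_χ`, so `g • d` is again a gcd of `A_χ`, i.e. `g • d = μ(g) d` for a
unit `μ(g)`; and `μ` is a cocycle as soon as `d ≠ 0`, which holds because Dedekind's independence
of characters makes some twisted trace `∑ χ(g)⁻¹ (g • a)` nonzero. Over `R = A^G` any two
semi-invariants are proportional, so `A_χ` is free iff it is generated by one element, iff it
contains an associate of `d`, iff `χ` and `μ` differ by a coboundary.
-/

section GCD

variable [IsDomain A]

theorem exists_isGCDOf [GCDMonoid A] [WfDvdMonoid A] (X : Set A) : ∃ d : A, IsGCDOf d X := by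
  by_cases hX : ∃ x₀ ∈ X, x₀ ≠ 0
  swap
  · simp only [not_exists, not_and, not_not] at hX
    exact ⟨0, fun x hx => hX x hx ▸ dvd_rfl, fun c _ => dvd_zero c⟩
  obtain ⟨x₀, hx₀, hx₀0⟩ := hX
  -- a common divisor `d` whose cofactor in `x₀` is minimal for strict divisibility is greatest
  obtain ⟨q, ⟨d, hdX, hdq⟩, hmin⟩ := wellFounded_dvdNotUnit.has_min
    {q : A | ∃ d : A, (∀ x ∈ X, d ∣ x) ∧ x₀ = d * q}
    ⟨x₀, 1, fun x _ => one_dvd x, (one_mul x₀).symm⟩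
  refine ⟨d, hdX, fun c hc => ?_⟩
  have hlX : ∀ x ∈ X, lcm c d ∣ x := fun x hx => lcm_dvd (hc x hx) (hdX x hx)
  obtain ⟨k, hlcm⟩ := dvd_lcm_right c d
  obtain ⟨q', hq'⟩ := hlX x₀ hx₀
  have hd0 : d ≠ 0 := by rintro rfl; exact hx₀0 (by rw [hdq, zero_mul])
  have hq : q = k * q' := mul_left_cancel₀ hd0 (by rw [← hdq, hq', hlcm, mul_assoc])
  have hk : IsUnit k := by
    by_contra hk
    have hq'0 : q' ≠ 0 := by rintro rfl; exact hx₀0 (by rw [hq', mul_zero])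
    exact hmin q' ⟨lcm c d, hlX, hq'⟩ ⟨hq'0, k, hk, by rw [hq, mul_comm]⟩
  exact hk.dvd_mul_right.mp (hlcm ▸ dvd_lcm_left c d)

theorem IsGCDOf.mul_left [GCDMonoid A] {d : A} {X : Set A} (hd : IsGCDOf d X) {a : A}
    (ha : a ≠ 0) : IsGCDOf (a * d) ((a * ·) '' X) := by
  refine ⟨fun _ ⟨x, hx, hax⟩ => hax ▸ mul_dvd_mul_left a (hd.1 x hx), fun c hc => ?_⟩
  rcases eq_or_ne d 0 with rfl | hd0
  · exact (mul_zero a).symm ▸ dvd_zero c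
  obtain ⟨t, hlcm⟩ := dvd_lcm_right c (a * d)
  have hdt : ∀ x ∈ X, d * t ∣ x := fun x hx => (mul_dvd_mul_iff_left ha).mp <| by
    rw [← mul_assoc, ← hlcm]
    exact lcm_dvd (hc _ ⟨x, hx, rfl⟩) (mul_dvd_mul_left a (hd.1 x hx))
  have ht : IsUnit t :=
    isUnit_of_dvd_one ((mul_dvd_mul_iff_left hd0).mp (by simpa using hd.2 _ hdt))
  exact ht.dvd_mul_right.mp (hlcm ▸ dvd_lcm_left c (a * d))

theorem IsGCDOf.associated {d d' : A} {X : Set A} (hd : IsGCDOf d X) (hd' : IsGCDOf d' X) :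
    Associated d d' :=
  associated_of_dvd_dvd (hd'.2 d hd.1) (hd.2 d' hd'.1)

end GCD

theorem divClosure_span_eq_of_isGCDOf {d : A} {X : Set A} (hd : IsGCDOf d X) :
    divClosure (Ideal.span X) = Ideal.span {d} := by
  refine le_antisymm (sInf_le ⟨⟨d, rfl⟩, ?_⟩) (le_sInf ?_)
  · exact Ideal.span_le.mpr fun x hx => Ideal.mem_span_singleton.mpr (hd.1 x hx)
  · rintro _ ⟨⟨b, rfl⟩, hX⟩
    refine Ideal.span_le.mpr ?_
    rintro _ rfl
    exact Ideal.mem_span_singleton.mpr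
      (hd.2 b fun x hx => Ideal.mem_span_singleton.mp (Ideal.span_le.mp hX hx))

theorem exists_smul_eq_of_free_of_dependent {R M : Type*} [CommRing R] [Nontrivial R]
    [AddCommGroup M] [Module R M] [Module.Free R M] [Nontrivial M]
    (hdep : ∀ x y : M, y ≠ 0 → ∃ s t : R, s ≠ 0 ∧ s • x = t • y) :
    ∃ e : M, ∀ x : M, ∃ r : R, r • e = x := by
  let b := Module.Free.chooseBasis R M
  obtain ⟨i⟩ := b.index_nonempty
  have hi : ∀ j, j = i := fun j => by
    by_contra hji
    obtain ⟨s, t, hs, hst⟩ := hdep (b j) (b i) (b.ne_zero i)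
    have := congrArg (fun z => b.repr z j) hst
    exact hs (by simpa [Ne.symm hji] using this)
  refine ⟨b i, fun x => Submodule.mem_span_singleton.mp ?_⟩
  have hrange : Set.range b = {b i} := Set.eq_singleton_iff_unique_mem.mpr
    ⟨⟨i, rfl⟩, by rintro _ ⟨j, rfl⟩; rw [hi j]⟩
  exact hrange ▸ b.span_eq ▸ Submodule.mem_top

variable {G}

theorem smul_units_inv_mul_smul (g : G) (u : Aˣ) : g • (↑u⁻¹ : A) * g • (u : A) = 1 := by
  rw [← smul_mul', Units.inv_mul, smul_one]

theorem IsCocycle.smul_inv {χ : G → Aˣ} (hχ : IsCocycle G χ) (h g : G) :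
    h • (↑(χ g)⁻¹ : A) = χ h * ↑(χ (h * g))⁻¹ := by
  linear_combination (↑(χ (h * g))⁻¹ * (χ h : A)) * smul_units_inv_mul_smul h (χ g)
    - h • (↑(χ g)⁻¹ : A) * Units.inv_mul (χ (h * g))
    + (h • (↑(χ g)⁻¹ : A) * ↑(χ (h * g))⁻¹) * hχ h g

theorem mul_mem_semiInv {χ μ : G → Aˣ} {x y : A} (hx : x ∈ semiInv G χ) (hy : y ∈ semiInv G μ) :
    x * y ∈ semiInv G (fun g => χ g * μ g) := fun g => by
  rw [smul_mul', hx g, hy g, Units.val_mul]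
  ring

theorem mul_inv_mem_semiInv_of_coboundary {χ μ : G → Aˣ} {u : Aˣ}
    (hμ : ∀ g : G, (μ g : A) = χ g * (↑u⁻¹ * g • (u : A))) {x : A} (hx : x ∈ semiInv G μ) :
    x * ↑u⁻¹ ∈ semiInv G χ := fun g => by
  rw [smul_mul', hx g, hμ g]
  linear_combination (χ g * ↑u⁻¹ * x : A) * smul_units_inv_mul_smul g u

theorem isGCDOf_semiInv_smul {χ : G → Aˣ} {d : A} (hd : IsGCDOf d (semiInv G χ)) (g : G) :
    IsGCDOf (g • d) (semiInv G χ) := by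
  have dvd_smul_iff {x : A} (hx : x ∈ semiInv G χ) (g : G) {y : A} : y ∣ g • x ↔ y ∣ x := by
    rw [hx g, Units.dvd_mul_left]
  refine ⟨fun x hx => (dvd_smul_iff hx g).mp (map_dvd (MulSemiringAction.toRingHom G A g)
    (hd.1 x hx)), fun c hc => ?_⟩
  have h := map_dvd (MulSemiringAction.toRingHom G A g)
    (hd.2 (g⁻¹ • c) fun x hx => (dvd_smul_iff hx g⁻¹).mp
      (map_dvd (MulSemiringAction.toRingHom G A g⁻¹) (hc x hx)))
  simpa [smul_smul] using h

def twistedTrace [Fintype G] (χ : G → Aˣ) (a : A) : A :=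
  ∑ g : G, ↑(χ g)⁻¹ * g • a

theorem twistedTrace_mem_semiInv [Fintype G] {χ : G → Aˣ} (hχ : IsCocycle G χ) (a : A) :
    twistedTrace χ a ∈ semiInv G χ := fun h => by
  simp only [twistedTrace, Finset.smul_sum, smul_mul', hχ.smul_inv, smul_smul, mul_assoc,
    ← Finset.mul_sum]
  congr 1
  exact Fintype.sum_equiv (Equiv.mulLeft h) _ _ fun _ => rfl

section Domain

variable [IsDomain A]

theorem isCocycle_of_mem_semiInv {μ : G → Aˣ} {x : A} (hx0 : x ≠ 0) (hx : x ∈ semiInv G μ) :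
    IsCocycle G μ := fun g h => mul_right_cancel₀ hx0 <| by
  rw [← hx, ← smul_smul, hx h, smul_mul', hx g]
  ring

theorem cohomologous_of_mem_semiInv {χ μ : G → Aˣ} {x : A} {u : Aˣ} (hx0 : x ≠ 0)
    (hx : x ∈ semiInv G χ) (hxu : x * u ∈ semiInv G μ) : Cohomologous G χ μ :=
  ⟨u, fun g => mul_left_cancel₀ hx0 <| by
    have h := hxu g
    rw [smul_mul', hx g] at h
    linear_combination (-(↑u⁻¹ : A)) * h - (μ g * x : A) * Units.inv_mul u⟩

theorem mem_fixedSubring_of_mul_mem_semiInv {χ : G → Aˣ} {y t : A} (hy0 : y ≠ 0)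
    (hy : y ∈ semiInv G χ) (hyt : y * t ∈ semiInv G χ) : t ∈ fixedSubring G := fun g =>
  mul_left_cancel₀ (mul_ne_zero (Units.ne_zero (χ g)) hy0) <| by
    rw [← hy g, ← smul_mul', hyt g, hy g, mul_assoc]

theorem IsGCDOf.exists_mem_semiInv {χ : G → Aˣ} {d : A} (hd : IsGCDOf d (semiInv G χ)) :
    ∃ μ : G → Aˣ, d ∈ semiInv G μ := by
  choose μ hμ using fun g => hd.associated (isGCDOf_semiInv_smul hd g)
  exact ⟨μ, fun g => by rw [← hμ g, mul_comm]⟩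

theorem exists_twistedTrace_ne_zero [Fintype G] [FaithfulSMul G A]
    (χ : G → Aˣ) : ∃ a : A, twistedTrace χ a ≠ 0 := by
  by_contra! h
  let ψ : G → (A →* A) := fun g => (MulSemiringAction.toRingHom G A g).toMonoidHom
  have hψ : Function.Injective ψ := fun g g' hgg' =>
    FaithfulSMul.eq_of_smul_eq_smul fun a => DFunLike.congr_fun hgg' a
  have hsum : ∑ g : G, ↑(χ g)⁻¹ • ⇑(ψ g) = 0 := funext fun a => by
    rw [Finset.sum_apply]
    exact h a
  exact Units.ne_zero _
    (Fintype.linearIndependent_iff.mp ((linearIndependent_monoidHom A A).comp ψ hψ) _ hsum 1)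

theorem exists_ne_zero_mem_semiInv [Finite G] [FaithfulSMul G A] {χ : G → Aˣ}
    (hχ : IsCocycle G χ) : ∃ b : A, b ≠ 0 ∧ b ∈ semiInv G χ := by
  have := Fintype.ofFinite G
  obtain ⟨a, ha⟩ := exists_twistedTrace_ne_zero (G := G) χ
  exact ⟨_, ha, twistedTrace_mem_semiInv hχ a⟩

theorem semiInvModule_exists_smul_eq_smul [Finite G] {χ : G → Aˣ} (x y : semiInvModule G χ)
    (hy : y ≠ 0) : ∃ s t : fixedSubring (A := A) G, s ≠ 0 ∧ s • x = t • y := by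
  have := Fintype.ofFinite G
  have hy0 : (y : A) ≠ 0 := fun h => hy (Subtype.ext h)
  -- `y * P = ∏ g • y` is invariant, so `y * (x * P)` is a semi-invariant and `x * P` is invariant
  set P : A := ∏ g ∈ Finset.univ.erase (1 : G), g • (y : A)
  have hN : (y : A) * P = ∏ g : G, g • (y : A) := by
    rw [← Finset.mul_prod_erase _ _ (Finset.mem_univ 1), one_smul]
  have hN0 : (y : A) * P ≠ 0 := hN ▸ Finset.prod_ne_zero_iff.mpr fun g _ =>
    (smul_eq_zero_iff_eq g).not.mpr hy0
  have hNfix : (y : A) * P ∈ fixedSubring (A := A) G := fun h => by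
    rw [hN, Finset.smul_prod']
    exact Fintype.prod_equiv (Equiv.mulLeft h) _ _ fun g => smul_smul h g (y : A)
  have hxP : (x : A) * P ∈ fixedSubring (A := A) G := by
    refine mem_fixedSubring_of_mul_mem_semiInv hy0 y.2 ?_
    rw [← mul_assoc, mul_right_comm]
    exact (semiInvModule G χ).smul_mem ⟨_, hNfix⟩ x.2
  refine ⟨⟨_, hNfix⟩, ⟨_, hxP⟩, fun h => hN0 (congrArg Subtype.val h), Subtype.ext ?_⟩
  show (y : A) * P * x = x * P * y
  ring

theorem free_semiInvModule_of_dvd {χ : G → Aˣ} {e : A} (he0 : e ≠ 0) (he : e ∈ semiInv G χ)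
    (hdvd : ∀ x ∈ semiInv G χ, e ∣ x) :
    Module.Free (fixedSubring (A := A) G) (semiInvModule G χ) := by
  refine Module.Free.of_equiv (LinearEquiv.ofBijective
    (LinearMap.toSpanSingleton (fixedSubring (A := A) G) (semiInvModule G χ) ⟨e, he⟩) ⟨?_, ?_⟩)
  · intro r r' h
    exact Subtype.ext (mul_right_cancel₀ he0 (congrArg Subtype.val h))
  · rintro ⟨x, hx⟩
    obtain ⟨q, rfl⟩ := hdvd x hx
    exact ⟨⟨q, mem_fixedSubring_of_mul_mem_semiInv he0 he hx⟩, Subtype.ext (mul_comm q e)⟩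

theorem free_semiInvModule_iff [Finite G] {χ : G → Aˣ} {b : A} (hb0 : b ≠ 0)
    (hb : b ∈ semiInv G χ) : Module.Free (fixedSubring (A := A) G) (semiInvModule G χ) ↔
      ∃ e ∈ semiInv G χ, ∀ x ∈ semiInv G χ, e ∣ x := by
  refine ⟨fun _ => ?_, fun ⟨e, he, hdvd⟩ => ?_⟩
  · have : Nontrivial (semiInvModule G χ) := ⟨⟨⟨b, hb⟩, 0, fun h => hb0 (congrArg Subtype.val h)⟩⟩
    obtain ⟨e, he⟩ := exists_smul_eq_of_free_of_dependent (R := fixedSubring (A := A) G)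
      (M := semiInvModule G χ) semiInvModule_exists_smul_eq_smul
    refine ⟨e, e.2, fun x hx => ?_⟩
    obtain ⟨r, hr⟩ := he ⟨x, hx⟩
    exact ⟨r, (congrArg Subtype.val hr).symm.trans (mul_comm _ _)⟩
  · exact free_semiInvModule_of_dvd (fun h => hb0 (zero_dvd_iff.mp (h ▸ hdvd b hb))) he hdvd

theorem cohomologous_iff_exists_dvd {χ μ : G → Aˣ} {d : A} (hd : IsGCDOf d (semiInv G χ))
    (hd0 : d ≠ 0) (hdμ : d ∈ semiInv G μ) :
    Cohomologous G χ μ ↔ ∃ e ∈ semiInv G χ, ∀ x ∈ semiInv G χ, e ∣ x := by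
  constructor
  · rintro ⟨u, hu⟩
    exact ⟨d * ↑u⁻¹, mul_inv_mem_semiInv_of_coboundary hu hdμ,
      fun x hx => Units.mul_right_dvd.mpr (hd.1 x hx)⟩
  · rintro ⟨e, he, hdvd⟩
    obtain ⟨w, rfl⟩ := associated_of_dvd_dvd (hd.2 e hdvd) (hd.1 e he)
    exact cohomologous_of_mem_semiInv (left_ne_zero_of_mul hd0) he hdμ

end Domain

/-- **Statement 8.**  Let `A` be a factorial domain and `G ⊆ Aut(A)` finite with `R = A^G`.
For every cocycle `χ ∈ Z¹(G, U(A))`: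
(i) `overline{A_χ A} = d_χ A` where `d_χ = gcd(A_χ)` is a semi-invariant with eigen-cocycle
`μ_χ ∈ Z¹(G, U(A))`, whose class `[μ_χ] ∈ H¹(G,U(A))` is uniquely determined;
(ii) the divisor class of the reflexive rank-one `R`-module `A_χ` equals `[χ⁻¹·μ_χ] ∈ H̃`
under the isomorphism `C_R ≅ H̃` (explicitly: for any nonzero `a ∈ A_{χ⁻¹}` the divisorial
ideal `a·A_χ` of `R` satisfies `overline{a A_χ A} = (a·d_χ)A` with `a·d_χ` a semi-invariant
with eigen-cocycle `χ⁻¹·μ_χ`);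
(iii) `A_χ` is a free `R`-module iff `[χ] = [μ_χ]` in `H¹(G, U(A))`. -/
theorem gcd_semiInv_eigencocycle {A : Type*} [CommRing A] [IsDomain A]
    [UniqueFactorizationMonoid A]
    (G : Type*) [Group G] [Finite G] [MulSemiringAction G A] [FaithfulSMul G A]
    (χ : G → Aˣ) (hχ : IsCocycle G χ) :
    (∃ d : A, IsGCDOf d (semiInv G χ) ∧
      divClosure (Ideal.span (semiInv G χ)) = Ideal.span {d} ∧
      ∃ μ : G → Aˣ, IsCocycle G μ ∧ d ∈ semiInv G μ) ∧
    (∀ d d' : A, ∀ μ μ' : G → Aˣ, IsGCDOf d (semiInv G χ) → IsGCDOf d' (semiInv G χ) →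
      IsCocycle G μ → IsCocycle G μ' → d ∈ semiInv G μ → d' ∈ semiInv G μ' →
      Cohomologous G μ μ') ∧
    (∀ d : A, ∀ μ : G → Aˣ, IsGCDOf d (semiInv G χ) → IsCocycle G μ → d ∈ semiInv G μ →
      (∀ a : A, a ≠ 0 → a ∈ semiInv G (fun g => (χ g)⁻¹) →
        divClosure (Ideal.span ((a * ·) '' semiInv G χ)) = Ideal.span {a * d} ∧
        a * d ∈ semiInv G (fun g => (χ g)⁻¹ * μ g)) ∧
      (Module.Free ↥(fixedSubring (A := A) G) ↥(semiInvModule G χ) ↔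
        Cohomologous G χ μ)) := by
  let _ : GCDMonoid A := UniqueFactorizationMonoid.toGCDMonoid A
  obtain ⟨b, hb0, hb⟩ := exists_ne_zero_mem_semiInv hχ
  have hd0 {d : A} (hd : IsGCDOf d (semiInv G χ)) : d ≠ 0 := fun h =>
    hb0 (zero_dvd_iff.mp (h ▸ hd.1 b hb))
  refine ⟨?_, ?_, fun d μ hd _ hdμ => ⟨fun a ha0 ha => ⟨?_, ?_⟩, ?_⟩⟩
  · obtain ⟨d, hd⟩ := exists_isGCDOf (semiInv G χ)
    obtain ⟨μ, hdμ⟩ := hd.exists_mem_semiInv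
    exact ⟨d, hd, divClosure_span_eq_of_isGCDOf hd, μ, isCocycle_of_mem_semiInv (hd0 hd) hdμ, hdμ⟩
  · intro d d' μ μ' hd hd' _ _ hdμ hd'μ'
    obtain ⟨v, rfl⟩ := hd.associated hd'
    exact cohomologous_of_mem_semiInv (hd0 hd) hdμ hd'μ'
  · exact divClosure_span_eq_of_isGCDOf (hd.mul_left ha0)
  · exact mul_mem_semiInv ha hdμ
  · exact (free_semiInvModule_iff hb0 hb).trans (cohomologous_iff_exists_dvd hd (hd0 hd) hdμ).symm

end QGor
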